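/- arXiv:2407.05400 — 5 statements merged into one kernel-verified Lean document; each statement's English description precedes it below -/
import Mathlib

section
/- With variances τ², σ_1², σ_2² > 0, the collaborative estimator variance satisfies Var(β̂_1^c)/Var(β̂_1^s) = (σ_1²τ² + σ_2²τ² + σ_1²σ_2²)/((σ_1²+τ²)(σ_2²+τ²)) ≤ 1; i.e., the collaborative estimator is at least as efficient as the single-analysis estimator regardless of parameter values. -/
/-! Expanding `(σ₁² + τ²)(σ₂² + τ²)` gives the numerator plus `τ⁴`, so the ratio is at most `1`;
the sample size `n` cancels from the two variances. -/

theorem div_mul_div_div_cancel_left {K : Type*} [Field K] {n : K} (hn : n ≠ 0) (a b c : K) :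
    a / (n * b) / (c / n) = a / (c * b) := by
  field_simp

theorem mul_add_mul_add_mul_le_add_mul_add {R : Type*} [CommRing R] [LinearOrder R]
    [IsStrictOrderedRing R] (x y t : R) :
    x * t + y * t + x * y ≤ (x + t) * (y + t) :=
  calc x * t + y * t + x * y ≤ x * t + y * t + x * y + t * t :=
        le_add_of_nonneg_right (mul_self_nonneg t)
    _ = (x + t) * (y + t) := by ring

theorem mul_add_mul_add_mul_div_le_one {K : Type*} [Field K] [LinearOrder K]
    [IsStrictOrderedRing K] {x y t : K} (hx : 0 ≤ x) (hy : 0 ≤ y) (ht : 0 ≤ t) :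
    (x * t + y * t + x * y) / ((x + t) * (y + t)) ≤ 1 :=
  div_le_one_of_le₀ (mul_add_mul_add_mul_le_add_mul_add x y t) (by positivity)

theorem stmt9_general (τ σ1 σ2 : ℝ)
    (n : ℕ) (hn : 1 ≤ n) :
    ((σ1 ^ 2 * τ ^ 2 + σ2 ^ 2 * τ ^ 2 + σ1 ^ 2 * σ2 ^ 2) / ((n : ℝ) * (σ2 ^ 2 + τ ^ 2)))
        / ((τ ^ 2 + σ1 ^ 2) / (n : ℝ))
      = (σ1 ^ 2 * τ ^ 2 + σ2 ^ 2 * τ ^ 2 + σ1 ^ 2 * σ2 ^ 2)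
        / ((σ1 ^ 2 + τ ^ 2) * (σ2 ^ 2 + τ ^ 2)) ∧
    (σ1 ^ 2 * τ ^ 2 + σ2 ^ 2 * τ ^ 2 + σ1 ^ 2 * σ2 ^ 2)
        / ((σ1 ^ 2 + τ ^ 2) * (σ2 ^ 2 + τ ^ 2)) ≤ 1 := by
  have hn0 : (n : ℝ) ≠ 0 := by exact_mod_cast (Nat.one_le_iff_ne_zero.mp hn)
  refine ⟨?_, mul_add_mul_add_mul_div_le_one (sq_nonneg σ1) (sq_nonneg σ2) (sq_nonneg τ)⟩
  rw [div_mul_div_div_cancel_left hn0, add_comm (τ ^ 2)]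

/-- With `τ², σ₁², σ₂² > 0`, the collaborative-to-single variance ratio equals
`(σ₁²τ²+σ₂²τ²+σ₁²σ₂²)/((σ₁²+τ²)(σ₂²+τ²))` and is at most `1`. -/
theorem stmt9 (τ σ1 σ2 : ℝ) (hτ : 0 < τ) (h1 : 0 < σ1) (h2 : 0 < σ2)
    (n : ℕ) (hn : 1 ≤ n) :
    ((σ1 ^ 2 * τ ^ 2 + σ2 ^ 2 * τ ^ 2 + σ1 ^ 2 * σ2 ^ 2) / ((n : ℝ) * (σ2 ^ 2 + τ ^ 2)))
        / ((τ ^ 2 + σ1 ^ 2) / (n : ℝ))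
      = (σ1 ^ 2 * τ ^ 2 + σ2 ^ 2 * τ ^ 2 + σ1 ^ 2 * σ2 ^ 2)
        / ((σ1 ^ 2 + τ ^ 2) * (σ2 ^ 2 + τ ^ 2)) ∧
    (σ1 ^ 2 * τ ^ 2 + σ2 ^ 2 * τ ^ 2 + σ1 ^ 2 * σ2 ^ 2)
        / ((σ1 ^ 2 + τ ^ 2) * (σ2 ^ 2 + τ ^ 2)) ≤ 1 :=
  stmt9_general τ σ1 σ2 n hn
end

section
/- With variances τ², σ_1², σ_2² > 0, Var(β̂_1^c)/Var(β̂_1^p) = ((σ_1²+τ²)/(σ_1²+σ_2²)) · (σ_1²τ² + σ_2²τ² + σ_1²σ_2²)/((σ_1²+τ²)(σ_2²+τ²)) ≤ 1; i.e., the collaborative estimator is at least as efficient as the paired-analysis estimator for all parameter values. -/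
/-! With `s₁ = σ₁²`, `s₂ = σ₂²`, `t = τ²`, both sides reduce to
`(s₁t + s₂t + s₁s₂) / ((s₁ + s₂)(s₂ + t))`, and the denominator exceeds the numerator by
exactly `s₂²`. -/

namespace CollaborativeEstimator

variable (s₁ s₂ t : ℝ)

theorem numerator_add_sq_eq : s₁ * t + s₂ * t + s₁ * s₂ + s₂ ^ 2 = (s₁ + s₂) * (s₂ + t) := by
  ring

theorem variance_ratio_le_one (h₁ : 0 ≤ s₁) (h₂ : 0 ≤ s₂) (ht : 0 ≤ t) :
    (s₁ * t + s₂ * t + s₁ * s₂) / ((s₁ + s₂) * (s₂ + t)) ≤ 1 :=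
  div_le_one_of_le₀ (by linarith [numerator_add_sq_eq s₁ s₂ t, sq_nonneg s₂]) (by positivity)

end CollaborativeEstimator

theorem div_mul_div_div_cancel₀ {x y z n : ℝ} (hn : n ≠ 0) :
    x / (n * y) / (z / n) = x / (z * y) := by
  rw [mul_comm, ← div_div, div_div_div_cancel_right₀ hn, div_div, mul_comm]

theorem div_mul_div_mul_cancel_left₀ {c d e x : ℝ} (hc : c ≠ 0) :
    c / d * (x / (c * e)) = x / (d * e) := by
  rw [div_mul_div_comm, mul_left_comm d, mul_div_mul_left _ _ hc]

open CollaborativeEstimator in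
theorem stmt10_general (τ σ1 σ2 : ℝ) (hτ : 0 < τ)
    (n : ℕ) (hn : 1 ≤ n) :
    ((σ1 ^ 2 * τ ^ 2 + σ2 ^ 2 * τ ^ 2 + σ1 ^ 2 * σ2 ^ 2) / ((n : ℝ) * (σ2 ^ 2 + τ ^ 2)))
        / ((σ1 ^ 2 + σ2 ^ 2) / (n : ℝ))
      = ((σ1 ^ 2 + τ ^ 2) / (σ1 ^ 2 + σ2 ^ 2))
        * ((σ1 ^ 2 * τ ^ 2 + σ2 ^ 2 * τ ^ 2 + σ1 ^ 2 * σ2 ^ 2)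
          / ((σ1 ^ 2 + τ ^ 2) * (σ2 ^ 2 + τ ^ 2))) ∧
    ((σ1 ^ 2 + τ ^ 2) / (σ1 ^ 2 + σ2 ^ 2))
        * ((σ1 ^ 2 * τ ^ 2 + σ2 ^ 2 * τ ^ 2 + σ1 ^ 2 * σ2 ^ 2)
          / ((σ1 ^ 2 + τ ^ 2) * (σ2 ^ 2 + τ ^ 2))) ≤ 1 := by
  have hn₀ : (n : ℝ) ≠ 0 := Nat.cast_ne_zero.mpr (Nat.one_le_iff_ne_zero.mp hn)
  have hσ₁τ : σ1 ^ 2 + τ ^ 2 ≠ 0 := by positivity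
  rw [div_mul_div_div_cancel₀ hn₀, div_mul_div_mul_cancel_left₀ hσ₁τ]
  exact ⟨rfl, variance_ratio_le_one _ _ _ (sq_nonneg σ1) (sq_nonneg σ2) (sq_nonneg τ)⟩

/-- With `τ², σ₁², σ₂² > 0`, the collaborative-to-paired variance ratio equals
`((σ₁²+τ²)/(σ₁²+σ₂²))·(σ₁²τ²+σ₂²τ²+σ₁²σ₂²)/((σ₁²+τ²)(σ₂²+τ²))` and is at most `1`. -/
theorem stmt10 (τ σ1 σ2 : ℝ) (hτ : 0 < τ) (h1 : 0 < σ1) (h2 : 0 < σ2)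
    (n : ℕ) (hn : 1 ≤ n) :
    ((σ1 ^ 2 * τ ^ 2 + σ2 ^ 2 * τ ^ 2 + σ1 ^ 2 * σ2 ^ 2) / ((n : ℝ) * (σ2 ^ 2 + τ ^ 2)))
        / ((σ1 ^ 2 + σ2 ^ 2) / (n : ℝ))
      = ((σ1 ^ 2 + τ ^ 2) / (σ1 ^ 2 + σ2 ^ 2))
        * ((σ1 ^ 2 * τ ^ 2 + σ2 ^ 2 * τ ^ 2 + σ1 ^ 2 * σ2 ^ 2)
          / ((σ1 ^ 2 + τ ^ 2) * (σ2 ^ 2 + τ ^ 2))) ∧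
    ((σ1 ^ 2 + τ ^ 2) / (σ1 ^ 2 + σ2 ^ 2))
        * ((σ1 ^ 2 * τ ^ 2 + σ2 ^ 2 * τ ^ 2 + σ1 ^ 2 * σ2 ^ 2)
          / ((σ1 ^ 2 + τ ^ 2) * (σ2 ^ 2 + τ ^ 2))) ≤ 1 :=
  stmt10_general τ σ1 σ2 hτ n hn
end

section
/- Under the paired model with known variances and balanced orthogonal design, the weighted least squares (GLS) estimator of β_1 based on the full response vector y = (y_1ᵀ, y_2ᵀ)ᵀ with covariance V equals the collaborative estimator: β̂_1^{wls} = ((σ_2²+τ²)Σx_{i,1}y_{i,1} − τ²Σx_{i,1}y_{i,2})/(n(σ_2²+τ²)) = (τ²β̂_1^p + σ_2²β̂_1^s)/(σ_2²+τ²). -/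
/-!
The covariance `V` is `diag(σ₁² I, σ₂² I)` plus `τ²` times a Gram matrix, hence positive
definite, and the balanced ±1 design satisfies `XᵀX = n I`, so `G = XᵀV⁻¹X` is positive definite
and the GLS estimator is well defined. `V⁻¹` has the same scalar-block shape, with blocks
`(σ₂² + τ², -τ², -τ², σ₁² + τ²) / Δ` where `Δ = (σ₁² + τ²)(σ₂² + τ²) - τ⁴`, and by the
orthogonality of the design the `β₁`-row of `G` is `(0, 0, n (σ₂² + τ²) / Δ, 0)`. So `β̂₁` is the
`β₁`-entry of `XᵀV⁻¹y` divided by `n (σ₂² + τ²) / Δ`, which is the collaborative estimator.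
-/

open Matrix

theorem inv_mulVec_apply_eq_div_of_row_eq_zero {K m : Type*} [Field K] [Fintype m]
    [DecidableEq m] {G : Matrix m m K} (hG : IsUnit G.det) {i : m}
    (hrow : ∀ j, j ≠ i → G i j = 0) (v : m → K) : (G⁻¹ *ᵥ v) i = v i / G i i := by
  have hii : G i i ≠ 0 := fun h ↦ hG.ne_zero <| det_eq_zero_of_row_eq_zero i fun j ↦
    (eq_or_ne j i).elim (fun hj ↦ hj ▸ h) (hrow j)
  have hv : (G *ᵥ (G⁻¹ *ᵥ v)) i = v i := by
    rw [mulVec_mulVec, mul_nonsing_inv _ hG, one_mulVec]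
  rw [mulVec, dotProduct, Finset.sum_eq_single i (fun j _ hj ↦ by rw [hrow j hj, zero_mul])
    (by simp)] at hv
  rw [eq_div_iff hii, mul_comm, hv]

section ScalarBlocks
variable {K m : Type*} [Field K] [Fintype m] [DecidableEq m]

theorem fromBlocks_smul_one_mul_fromBlocks_smul_one (a b c d a' b' c' d' : K) :
    fromBlocks (a • 1) (b • 1) (c • 1) (d • 1) * fromBlocks (a' • 1) (b' • 1) (c' • 1) (d' • 1)
      = (fromBlocks ((a * a' + b * c') • 1) ((a * b' + b * d') • 1)
          ((c * a' + d * c') • 1) ((c * b' + d * d') • 1) : Matrix (m ⊕ m) (m ⊕ m) K) := by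
  simp [fromBlocks_multiply, add_smul, smul_smul, mul_comm]

theorem inv_fromBlocks_smul_one {a b c d : K} (h : a * d - b * c ≠ 0) :
    (fromBlocks (a • 1) (b • 1) (c • 1) (d • 1) : Matrix (m ⊕ m) (m ⊕ m) K)⁻¹
      = fromBlocks ((d / (a * d - b * c)) • 1) ((-b / (a * d - b * c)) • 1)
          ((-c / (a * d - b * c)) • 1) ((a / (a * d - b * c)) • 1) := by
  refine inv_eq_right_inv ?_
  rw [fromBlocks_smul_one_mul_fromBlocks_smul_one,
    ← show fromBlocks ((1 : K) • 1) ((0 : K) • 1) ((0 : K) • 1) ((1 : K) • 1) = 1 by simp]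
  generalize hΔ : a * d - b * c = Δ at h ⊢
  congr 2 <;> field_simp <;> subst hΔ <;> ring

end ScalarBlocks

theorem posDef_fromBlocks_add_smul_one {m : Type*} [Fintype m] [DecidableEq m] {s₁ s₂ t : ℝ}
    (h₁ : 0 < s₁) (h₂ : 0 < s₂) (ht : 0 ≤ t) :
    (fromBlocks ((s₁ + t) • 1) (t • 1) (t • 1) ((s₂ + t) • 1) :
      Matrix (m ⊕ m) (m ⊕ m) ℝ).PosDef := by
  have hJ : (fromBlocks 1 1 1 1 : Matrix (m ⊕ m) (m ⊕ m) ℝ).PosSemidef := by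
    have := posSemidef_conjTranspose_mul_self (fromCols (1 : Matrix m m ℝ) (1 : Matrix m m ℝ))
    rwa [conjTranspose_fromCols_eq_fromRows_conjTranspose, conjTranspose_one,
      fromRows_mul_fromCols, Matrix.one_mul] at this
  have hsplit : (fromBlocks ((s₁ + t) • 1) (t • 1) (t • 1) ((s₂ + t) • 1) :
      Matrix (m ⊕ m) (m ⊕ m) ℝ)
        = diagonal (Sum.elim (fun _ ↦ s₁) (fun _ ↦ s₂)) + t • fromBlocks 1 1 1 1 := by
    rw [← fromBlocks_diagonal, fromBlocks_smul, fromBlocks_add]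
    simp [add_smul, smul_one_eq_diagonal]
  rw [hsplit]
  exact (posDef_diagonal_iff.mpr (by rintro (i | i) <;> assumption)).add_posSemidef (hJ.smul ht)

section PairedDesign
variable {ι : Type*} [Fintype ι]

/-- Columns are ordered `(α₁, α₂, β₁, β₂)`, so coordinate `2` is `β₁`. -/
def pairedDesign (x₁ x₂ : ι → ℝ) : Matrix (ι ⊕ ι) (Fin 4) ℝ :=
  of (Sum.elim (fun i ↦ ![1, 0, x₁ i, 0]) (fun i ↦ ![0, 1, 0, x₂ i]))

variable {x₁ x₂ : ι → ℝ}

theorem pairedDesign_transpose_mul_self (hb₁ : ∑ i, x₁ i = 0) (hb₂ : ∑ i, x₂ i = 0)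
    (hs₁ : ∑ i, x₁ i * x₁ i = Fintype.card ι) (hs₂ : ∑ i, x₂ i * x₂ i = Fintype.card ι) :
    (pairedDesign x₁ x₂)ᵀ * pairedDesign x₁ x₂ = (Fintype.card ι : ℝ) • 1 := by
  ext j k
  fin_cases j <;> fin_cases k <;>
    simp [pairedDesign, mul_apply, Fintype.sum_sum_type, hb₁, hb₂, hs₁, hs₂]

theorem pairedDesign_mulVec_injective [Nonempty ι] (hb₁ : ∑ i, x₁ i = 0) (hb₂ : ∑ i, x₂ i = 0)
    (hs₁ : ∑ i, x₁ i * x₁ i = Fintype.card ι) (hs₂ : ∑ i, x₂ i * x₂ i = Fintype.card ι) :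
    Function.Injective (pairedDesign x₁ x₂).mulVec := by
  intro v w hvw
  have := congrArg ((pairedDesign x₁ x₂)ᵀ *ᵥ ·) hvw
  simpa [mulVec_mulVec, pairedDesign_transpose_mul_self hb₁ hb₂ hs₁ hs₂, smul_mulVec] using this


variable [DecidableEq ι] {W : Matrix (ι ⊕ ι) (ι ⊕ ι) ℝ} {p q q' r : ℝ}

theorem pairedDesign_transpose_mul_apply_two
    (hW : W = fromBlocks (p • 1) (q • 1) (q' • 1) (r • 1)) :
    ((pairedDesign x₁ x₂)ᵀ * W) 2 = Sum.elim (p • x₁) (q • x₁) := by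
  subst hW
  ext (k | k) <;> simp [pairedDesign, mul_apply, Fintype.sum_sum_type, one_apply, mul_comm]

theorem pairedDesign_gram_apply_two (hW : W = fromBlocks (p • 1) (q • 1) (q' • 1) (r • 1))
    (j : Fin 4) :
    ((pairedDesign x₁ x₂)ᵀ * W * pairedDesign x₁ x₂) 2 j
      = ∑ i, (p * (x₁ i * pairedDesign x₁ x₂ (.inl i) j)
        + q * (x₁ i * pairedDesign x₁ x₂ (.inr i) j)) := by
  rw [mul_apply, pairedDesign_transpose_mul_apply_two hW, Fintype.sum_sum_type,
    ← Finset.sum_add_distrib]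
  simp [mul_assoc]

theorem pairedDesign_gls_apply_two (hW : W = fromBlocks (p • 1) (q • 1) (q' • 1) (r • 1))
    (hb₁ : ∑ i, x₁ i = 0) (ho : ∑ i, x₁ i * x₂ i = 0)
    (hG : IsUnit ((pairedDesign x₁ x₂)ᵀ * W * pairedDesign x₁ x₂).det) (y₁ y₂ : ι → ℝ) :
    ((((pairedDesign x₁ x₂)ᵀ * W * pairedDesign x₁ x₂)⁻¹ * (pairedDesign x₁ x₂)ᵀ * W)
        *ᵥ Sum.elim y₁ y₂) 2
      = (p * ∑ i, x₁ i * y₁ i + q * ∑ i, x₁ i * y₂ i) / (p * ∑ i, x₁ i * x₁ i) := by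
  have hrow : ∀ j, j ≠ 2 → ((pairedDesign x₁ x₂)ᵀ * W * pairedDesign x₁ x₂) 2 j = 0 := by
    intro j hj
    rw [pairedDesign_gram_apply_two hW]
    fin_cases j <;> simp_all [pairedDesign, ← Finset.mul_sum]
  have hnum : (((pairedDesign x₁ x₂)ᵀ * W) *ᵥ Sum.elim y₁ y₂) 2
      = p * ∑ i, x₁ i * y₁ i + q * ∑ i, x₁ i * y₂ i := by
    change ((pairedDesign x₁ x₂)ᵀ * W) 2 ⬝ᵥ Sum.elim y₁ y₂ = _
    rw [pairedDesign_transpose_mul_apply_two hW, sumElim_dotProduct_sumElim]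
    simp [dotProduct, Finset.mul_sum, mul_assoc]
  rw [Matrix.mul_assoc, ← mulVec_mulVec, inv_mulVec_apply_eq_div_of_row_eq_zero hG hrow, hnum,
    pairedDesign_gram_apply_two hW]
  simp [pairedDesign, ← Finset.mul_sum]

end PairedDesign

theorem stmt13_general (n : ℕ) (hn : 0 < n) (σ1 σ2 τ : ℝ)
    (h1 : 0 < σ1) (h2 : 0 < σ2)
    (x1 x2 : Fin n → ℝ)
    (hx1 : ∀ i, x1 i = 1 ∨ x1 i = -1) (hx2 : ∀ i, x2 i = 1 ∨ x2 i = -1)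
    (hb1 : ∑ i, x1 i = 0) (hb2 : ∑ i, x2 i = 0) (ho : ∑ i, x1 i * x2 i = 0)
    (y1 y2 : Fin n → ℝ) :
    let V : Matrix (Fin n ⊕ Fin n) (Fin n ⊕ Fin n) ℝ :=
      Matrix.fromBlocks ((σ1 ^ 2 + τ ^ 2) • 1) (τ ^ 2 • 1) (τ ^ 2 • 1) ((σ2 ^ 2 + τ ^ 2) • 1)
    let X : Matrix (Fin n ⊕ Fin n) (Fin 4) ℝ :=
      Matrix.of (Sum.elim (fun i => ![1, 0, x1 i, 0]) (fun i => ![0, 1, 0, x2 i]))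
    let y : Fin n ⊕ Fin n → ℝ := Sum.elim y1 y2
    let θ : Fin 4 → ℝ := ((Xᵀ * V⁻¹ * X)⁻¹ * Xᵀ * V⁻¹).mulVec y
    θ 2 = ((σ2 ^ 2 + τ ^ 2) * ∑ i, x1 i * y1 i - τ ^ 2 * ∑ i, x1 i * y2 i)
        / (n * (σ2 ^ 2 + τ ^ 2)) ∧
    θ 2 = (τ ^ 2 * ((n : ℝ)⁻¹ * ∑ i, x1 i * (y1 i - y2 i))
        + σ2 ^ 2 * ((n : ℝ)⁻¹ * ∑ i, x1 i * y1 i)) / (σ2 ^ 2 + τ ^ 2) := by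
  intro V X y θ
  have : Nonempty (Fin n) := ⟨⟨0, hn⟩⟩
  have hs1 : ∑ i, x1 i * x1 i = Fintype.card (Fin n) := by simp [mul_self_eq_one_iff.mpr (hx1 _)]
  have hs2 : ∑ i, x2 i * x2 i = Fintype.card (Fin n) := by simp [mul_self_eq_one_iff.mpr (hx2 _)]
  have hdet : (σ1 ^ 2 + τ ^ 2) * (σ2 ^ 2 + τ ^ 2) - τ ^ 2 * τ ^ 2 ≠ 0 := by
    ring_nf; positivity
  have hG : (Xᵀ * V⁻¹ * X).PosDef := by
    have := (posDef_fromBlocks_add_smul_one (pow_pos h1 2) (pow_pos h2 2)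
      (sq_nonneg τ)).inv.conjTranspose_mul_mul_same (pairedDesign_mulVec_injective hb1 hb2 hs1 hs2)
    rwa [conjTranspose_eq_transpose_of_trivial] at this
  have hθ := pairedDesign_gls_apply_two (inv_fromBlocks_smul_one hdet) hb1 ho
    ((isUnit_iff_isUnit_det _).mp hG.isUnit) y1 y2
  change θ 2 = _ at hθ
  have hsub : ∑ i, x1 i * (y1 i - y2 i) = ∑ i, x1 i * y1 i - ∑ i, x1 i * y2 i := by
    simp [mul_sub]
  have hc : σ2 ^ 2 + τ ^ 2 ≠ 0 := by positivity
  have hn' : (n : ℝ) ≠ 0 := by positivity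
  rw [hθ, hs1, hsub, Fintype.card_fin]
  generalize (σ1 ^ 2 + τ ^ 2) * (σ2 ^ 2 + τ ^ 2) - τ ^ 2 * τ ^ 2 = Δ at hdet ⊢
  constructor <;> field_simp <;> ring

/-- Under the paired model with known variances and balanced orthogonal design, the GLS
(weighted least squares) estimate of `β₁` from the stacked response `y = (y₁ᵀ, y₂ᵀ)ᵀ` with
covariance `V` equals the collaborative estimator
`(τ²β̂₁ᵖ + σ₂²β̂₁ˢ)/(σ₂²+τ²) = ((σ₂²+τ²)Σx_{i,1}y_{i,1} − τ²Σx_{i,1}y_{i,2})/(n(σ₂²+τ²))`. -/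
theorem stmt13 (n : ℕ) (hn : 0 < n) (σ1 σ2 τ : ℝ)
    (h1 : 0 < σ1) (h2 : 0 < σ2) (hτ : 0 ≤ τ)
    (x1 x2 : Fin n → ℝ)
    (hx1 : ∀ i, x1 i = 1 ∨ x1 i = -1) (hx2 : ∀ i, x2 i = 1 ∨ x2 i = -1)
    (hb1 : ∑ i, x1 i = 0) (hb2 : ∑ i, x2 i = 0) (ho : ∑ i, x1 i * x2 i = 0)
    (y1 y2 : Fin n → ℝ) :
    let V : Matrix (Fin n ⊕ Fin n) (Fin n ⊕ Fin n) ℝ :=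
      Matrix.fromBlocks ((σ1 ^ 2 + τ ^ 2) • 1) (τ ^ 2 • 1) (τ ^ 2 • 1) ((σ2 ^ 2 + τ ^ 2) • 1)
    let X : Matrix (Fin n ⊕ Fin n) (Fin 4) ℝ :=
      Matrix.of (Sum.elim (fun i => ![1, 0, x1 i, 0]) (fun i => ![0, 1, 0, x2 i]))
    let y : Fin n ⊕ Fin n → ℝ := Sum.elim y1 y2
    let θ : Fin 4 → ℝ := ((Xᵀ * V⁻¹ * X)⁻¹ * Xᵀ * V⁻¹).mulVec y
    θ 2 = ((σ2 ^ 2 + τ ^ 2) * ∑ i, x1 i * y1 i - τ ^ 2 * ∑ i, x1 i * y2 i)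
        / (n * (σ2 ^ 2 + τ ^ 2)) ∧
    θ 2 = (τ ^ 2 * ((n : ℝ)⁻¹ * ∑ i, x1 i * (y1 i - y2 i))
        + σ2 ^ 2 * ((n : ℝ)⁻¹ * ∑ i, x1 i * y1 i)) / (σ2 ^ 2 + τ ^ 2) :=
  stmt13_general n hn σ1 σ2 τ h1 h2 x1 x2 hx1 hx2 hb1 hb2 ho y1 y2
end

section
/- For the three asymptotically unbiased estimators of β_1 in the partially paired setting with covariance matrix proportional to diag-block([[n_0⁻¹(σ_1²+σ_2²), n_0⁻¹σ_1²],[n_0⁻¹σ_1², n_0⁻¹(σ_1²+τ²)]], n_1⁻¹(σ_1²+τ²)), the best linear unbiased combination has variance [(σ_1²+σ_2²+σ_1²σ_2²/τ²)⁻¹n_0 + (τ²+σ_1²+σ_1²τ²/σ_2²)⁻¹n_0 + (τ²+σ_1²)⁻¹n_1]⁻¹. -/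
/-!
Σ is block diagonal, so `1ᵀΣ⁻¹1` is the sum of the entries of the inverse of the paired
2 × 2 block plus the precision `n₁ / (σ₁² + τ²)` of the unpaired estimator. With
`D = σ₁²τ² + σ₁²σ₂² + σ₂²τ²` the paired block has determinant `D / n₀²` and contributes
`n₀ (τ² + σ₂²) / D`, which is exactly the sum of the two `n₀`-terms, `n₀ τ² / D` and `n₀ σ₂² / D`.
-/

open Matrix

section FinThreeBlockDiag

variable {K : Type*} [Field K]

theorem inv_fin_three_blockDiag (a b d c : K) (hΔ : a * d - b ^ 2 ≠ 0) (hc : c ≠ 0) :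
    (!![a, b, 0; b, d, 0; 0, 0, c])⁻¹ =
      !![d / (a * d - b ^ 2), -b / (a * d - b ^ 2), 0;
         -b / (a * d - b ^ 2), a / (a * d - b ^ 2), 0;
         0, 0, c⁻¹] := by
  apply inv_eq_right_inv
  ext i j
  fin_cases i <;> fin_cases j <;>
    simp [mul_apply, Fin.sum_univ_three, one_apply] <;> field_simp <;> ring

theorem one_dotProduct_inv_fin_three_blockDiag_mulVec_one (a b d c : K) (hΔ : a * d - b ^ 2 ≠ 0)
    (hc : c ≠ 0) :
    (fun _ => 1 : Fin 3 → K) ⬝ᵥ (!![a, b, 0; b, d, 0; 0, 0, c])⁻¹ *ᵥ (fun _ => 1) =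
      (a + d - 2 * b) / (a * d - b ^ 2) + c⁻¹ := by
  rw [inv_fin_three_blockDiag a b d c hΔ hc]
  simp only [dotProduct, mulVec, of_apply, cons_val', cons_val_fin_one, Fin.sum_univ_three,
    cons_val_zero, cons_val_one, cons_val, one_mul, mul_one, add_zero, zero_add]
  ring

end FinThreeBlockDiag

theorem stmt16_general (τ σ1 σ2 : ℝ) (hτ : 0 < τ) (h2 : 0 < σ2)
    (n0 n1 : ℕ) (hn0 : 1 ≤ n0) (hn1 : 1 ≤ n1) :
    let S : Matrix (Fin 3) (Fin 3) ℝ :=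
      !![(σ1 ^ 2 + σ2 ^ 2) / n0, σ1 ^ 2 / n0, 0;
         σ1 ^ 2 / n0, (σ1 ^ 2 + τ ^ 2) / n0, 0;
         0, 0, (σ1 ^ 2 + τ ^ 2) / n1]
    let one : Fin 3 → ℝ := fun _ => 1
    (one ⬝ᵥ S⁻¹.mulVec one)⁻¹ =
      ((σ1 ^ 2 + σ2 ^ 2 + σ1 ^ 2 * σ2 ^ 2 / τ ^ 2)⁻¹ * n0
        + (τ ^ 2 + σ1 ^ 2 + σ1 ^ 2 * τ ^ 2 / σ2 ^ 2)⁻¹ * n0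
        + (τ ^ 2 + σ1 ^ 2)⁻¹ * n1)⁻¹ := by
  intro S one
  have hn0' : (0 : ℝ) < n0 := by exact_mod_cast hn0
  have hn1' : (0 : ℝ) < n1 := by exact_mod_cast hn1
  set D := σ1 ^ 2 * τ ^ 2 + σ1 ^ 2 * σ2 ^ 2 + σ2 ^ 2 * τ ^ 2
  have hD : 0 < D := by positivity
  have hΔ : (σ1 ^ 2 + σ2 ^ 2) / n0 * ((σ1 ^ 2 + τ ^ 2) / n0) - (σ1 ^ 2 / n0) ^ 2 = D / n0 ^ 2 := by
    field_simp
    ring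
  have hpaired : ((σ1 ^ 2 + σ2 ^ 2) / n0 + (σ1 ^ 2 + τ ^ 2) / n0 - 2 * (σ1 ^ 2 / n0)) /
      (D / n0 ^ 2) = τ ^ 2 / D * n0 + σ2 ^ 2 / D * n0 := by
    field_simp
    ring
  have hτ_term : (σ1 ^ 2 + σ2 ^ 2 + σ1 ^ 2 * σ2 ^ 2 / τ ^ 2)⁻¹ = τ ^ 2 / D := by
    field_simp
    ring
  have hσ2_term : (τ ^ 2 + σ1 ^ 2 + σ1 ^ 2 * τ ^ 2 / σ2 ^ 2)⁻¹ = σ2 ^ 2 / D := by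
    field_simp
    ring
  rw [one_dotProduct_inv_fin_three_blockDiag_mulVec_one _ _ _ _ (hΔ ▸ by positivity) (by positivity),
    hΔ, hpaired, hτ_term, hσ2_term, inv_div]
  ring

/-- For the three unbiased estimators of `β₁` in the partially paired setting, with
covariance matrix `[[n₀⁻¹(σ₁²+σ₂²), n₀⁻¹σ₁², 0],[n₀⁻¹σ₁², n₀⁻¹(σ₁²+τ²), 0],
[0, 0, n₁⁻¹(σ₁²+τ²)]]`, the BLUE combination has variance
`[(σ₁²+σ₂²+σ₁²σ₂²/τ²)⁻¹n₀ + (τ²+σ₁²+σ₁²τ²/σ₂²)⁻¹n₀ + (τ²+σ₁²)⁻¹n₁]⁻¹`. -/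
theorem stmt16 (τ σ1 σ2 : ℝ) (hτ : 0 < τ) (h1 : 0 < σ1) (h2 : 0 < σ2)
    (n0 n1 : ℕ) (hn0 : 1 ≤ n0) (hn1 : 1 ≤ n1) :
    let S : Matrix (Fin 3) (Fin 3) ℝ :=
      !![(σ1 ^ 2 + σ2 ^ 2) / n0, σ1 ^ 2 / n0, 0;
         σ1 ^ 2 / n0, (σ1 ^ 2 + τ ^ 2) / n0, 0;
         0, 0, (σ1 ^ 2 + τ ^ 2) / n1]
    let one : Fin 3 → ℝ := fun _ => 1
    (one ⬝ᵥ S⁻¹.mulVec one)⁻¹ =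
      ((σ1 ^ 2 + σ2 ^ 2 + σ1 ^ 2 * σ2 ^ 2 / τ ^ 2)⁻¹ * n0
        + (τ ^ 2 + σ1 ^ 2 + σ1 ^ 2 * τ ^ 2 / σ2 ^ 2)⁻¹ * n0
        + (τ ^ 2 + σ1 ^ 2)⁻¹ * n1)⁻¹ :=
  stmt16_general τ σ1 σ2 hτ h2 n0 n1 hn0 hn1
end

section
/- The inverse of the 2×2 matrix [[a n_0 + b n_1, e n_0],[e n_0, c n_0 + d n_2]] exists whenever (a n_0 + b n_1)(c n_0 + d n_2) > e²n_0², and asymptotically, if n_0/n → r_0, n_1/n → r_1, n_2/n → r_2, B_n/n → 0 and A_n/n → A₀ invertible, then (D_n/n − (B_nᵀ/n)(A_n/n)⁻¹(B_n/n)) → D₀ whenever D_n/n → D₀; consequently n·Var of the GLS β-estimates converges to diag(1/(a r_0 + b r_1), 1/(c r_0 + d r_2)). -/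
/-!
The normalized blocks converge: `A/n → A₀`, `B/n → 0`, and `D/n → D₀ = diag(a r₀ + b r₁,
c r₀ + d r₂)` since `x₁₂ = o(n)`. Matrix inversion is continuous at the invertible `A₀`, so the
normalized Schur complement tends to `D₀ − 0 = D₀`. The Schur complement is homogeneous of degree
one, `D/n − (B/n)ᵀ (A/n)⁻¹ (B/n) = (D − Bᵀ A⁻¹ B)/n`, so `n (D − Bᵀ A⁻¹ B)⁻¹` is the inverse of the
normalized Schur complement and, by continuity of inversion at `D₀`, tends to `D₀⁻¹`.
-/

open Matrix Filter Topology

namespace Matrix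

section Field

variable {m n K : Type*} [Fintype n] [DecidableEq n] [Field K]

/-- No invertibility of `M` is needed: for singular `M` both sides are the junk value `0`. -/
theorem inv_smul_of_ne_zero {c : K} (hc : c ≠ 0) (M : Matrix n n K) :
    (c • M)⁻¹ = c⁻¹ • M⁻¹ := by
  by_cases hM : IsUnit M.det
  · simpa only [Units.smul_def, Units.val_inv_eq_inv_val, Units.val_mk0] using
      inv_smul' M (Units.mk0 c hc) hM
  · have hcM : ¬IsUnit (c • M).det := by simpa [det_smul, hc] using hM
    rw [nonsing_inv_apply_not_isUnit _ hM, nonsing_inv_apply_not_isUnit _ hcM, smul_zero]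

theorem smul_sub_transpose_mul_inv_mul_smul [Fintype m] {c : K} (hc : c ≠ 0)
    (A : Matrix n n K) (B : Matrix n m K) (D : Matrix m m K) :
    c • D - (c • B)ᵀ * (c • A)⁻¹ * (c • B) = c • (D - Bᵀ * A⁻¹ * B) := by
  rw [inv_smul_of_ne_zero hc, transpose_smul, smul_sub]
  simp only [Matrix.smul_mul, Matrix.mul_smul, smul_smul, inv_mul_cancel₀ hc, mul_one]

theorem inv_of_fin_two_diag {p q : K} (hp : p ≠ 0) (hq : q ≠ 0) :
    (!![p, 0; 0, q])⁻¹ = !![p⁻¹, 0; 0, q⁻¹] :=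
  inv_eq_right_inv (by simp [hp, hq, one_fin_two])

end Field

theorem isUnit_of_fin_two_of_sq_lt_mul {K : Type*} [Field K] [LinearOrder K]
    [IsStrictOrderedRing K] {p q s : K} (h : q ^ 2 < p * s) : IsUnit !![p, q; q, s] := by
  rw [isUnit_iff_isUnit_det, det_fin_two_of, isUnit_iff_ne_zero]
  nlinarith

theorem tendsto_of_fin_two {α R : Type*} [TopologicalSpace R] {l : Filter α}
    {f g h i : α → R} {p q r s : R} (hf : Tendsto f l (𝓝 p)) (hg : Tendsto g l (𝓝 q))
    (hh : Tendsto h l (𝓝 r)) (hi : Tendsto i l (𝓝 s)) :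
    Tendsto (fun k => !![f k, g k; h k, i k]) l (𝓝 !![p, q; r, s]) := by
  refine tendsto_pi_nhds.2 fun x => tendsto_pi_nhds.2 fun y => ?_
  fin_cases x <;> fin_cases y <;> assumption

theorem tendsto_inv_natCast_smul_of_fin_two {l : Filter ℕ} {f g h i : ℕ → ℝ} {p q r s : ℝ}
    (hf : Tendsto (fun k => f k / k) l (𝓝 p)) (hg : Tendsto (fun k => g k / k) l (𝓝 q))
    (hh : Tendsto (fun k => h k / k) l (𝓝 r)) (hi : Tendsto (fun k => i k / k) l (𝓝 s)) :
    Tendsto (fun k : ℕ => (k : ℝ)⁻¹ • !![f k, g k; h k, i k]) l (𝓝 !![p, q; r, s]) := by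
  simpa only [smul_of, smul_cons, smul_eq_mul, smul_empty, inv_mul_eq_div] using
    tendsto_of_fin_two hf hg hh hi

end Matrix

theorem Filter.Tendsto.matrix_inv {α n K : Type*} [Fintype n] [DecidableEq n] [Field K]
    [TopologicalSpace K] [IsTopologicalRing K] [ContinuousInv₀ K] {l : Filter α}
    {f : α → Matrix n n K} {M : Matrix n n K} (hf : Tendsto f l (𝓝 M)) (hM : IsUnit M.det) :
    Tendsto (fun k => (f k)⁻¹) l (𝓝 M⁻¹) := by
  refine (continuousAt_matrix_inv M ?_).tendsto.comp hf
  rw [Ring.inverse_eq_inv']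
  exact continuousAt_inv₀ hM.ne_zero

/-- (i) The 2×2 matrix `[[a n₀+b n₁, e n₀],[e n₀, c n₀+d n₂]]` is invertible whenever
`(a n₀+b n₁)(c n₀+d n₂) > e²n₀²`. (ii) If `n₀/n → r₀`, `n₁/n → r₁`, `n₂/n → r₂`,
`Bₙ/n → 0`, the off-diagonal design term is `o(n)`, and the limit `A₀` is invertible,
then the normalized Schur complement `Dₙ/n − (Bₙᵀ/n)(Aₙ/n)⁻¹(Bₙ/n)` converges to
`D₀ = diag(a r₀+b r₁, c r₀+d r₂)`; consequently `n·Var` of the GLS `β`-estimates,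
`n(Dₙ − BₙᵀAₙ⁻¹Bₙ)⁻¹`, converges to `diag(1/(a r₀+b r₁), 1/(c r₀+d r₂))`. -/
theorem stmt18 (a b c d e : ℝ) (ha : 0 < a) (hb : 0 < b) (hc : 0 < c) (hd : 0 < d)
    (r0 r1 r2 : ℝ) (hr0 : 0 < r0) (hr1 : 0 ≤ r1) (hr2 : 0 ≤ r2)
    (n0 n1 n2 : ℕ → ℕ)
    (h0 : Tendsto (fun k => (n0 k : ℝ) / k) atTop (nhds r0))
    (h1 : Tendsto (fun k => (n1 k : ℝ) / k) atTop (nhds r1))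
    (h2 : Tendsto (fun k => (n2 k : ℝ) / k) atTop (nhds r2))
    (B : ℕ → Matrix (Fin 2) (Fin 2) ℝ)
    (hB : Tendsto (fun (k : ℕ) => (k : ℝ)⁻¹ • B k) atTop (nhds 0))
    (x12 : ℕ → ℝ)
    (hx : Tendsto (fun k => x12 k / k) atTop (nhds 0))
    (hA0 : IsUnit (!![a * r0 + b * r1, e * r0; e * r0, c * r0 + d * r2]).det) :
    let A : ℕ → Matrix (Fin 2) (Fin 2) ℝ := fun k =>
      !![a * n0 k + b * n1 k, e * n0 k; e * n0 k, c * n0 k + d * n2 k]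
    let D : ℕ → Matrix (Fin 2) (Fin 2) ℝ := fun k =>
      !![a * n0 k + b * n1 k, e * x12 k; e * x12 k, c * n0 k + d * n2 k]
    (∀ m0 m1 m2 : ℕ,
        (a * m0 + b * m1) * (c * m0 + d * m2) > e ^ 2 * (m0 : ℝ) ^ 2 →
        IsUnit !![a * m0 + b * m1, e * (m0 : ℝ); e * m0, c * m0 + d * m2]) ∧
    Tendsto (fun (k : ℕ) => ((k : ℝ)⁻¹ • D k)
        - ((k : ℝ)⁻¹ • B k)ᵀ * ((k : ℝ)⁻¹ • A k)⁻¹ * ((k : ℝ)⁻¹ • B k)) atTop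
      (nhds !![a * r0 + b * r1, 0; 0, c * r0 + d * r2]) ∧
    Tendsto (fun (k : ℕ) => (k : ℝ) • (D k - (B k)ᵀ * (A k)⁻¹ * B k)⁻¹) atTop
      (nhds !![(a * r0 + b * r1)⁻¹, 0; 0, (c * r0 + d * r2)⁻¹]) := by
  intro A D
  have hp : 0 < a * r0 + b * r1 := by positivity
  have hq : 0 < c * r0 + d * r2 := by positivity
  have hP : Tendsto (fun k => (a * n0 k + b * n1 k) / (k : ℝ)) atTop (𝓝 (a * r0 + b * r1)) := by
    simpa only [add_div, mul_div_assoc] using (h0.const_mul a).add (h1.const_mul b)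
  have hQ : Tendsto (fun k => (c * n0 k + d * n2 k) / (k : ℝ)) atTop (𝓝 (c * r0 + d * r2)) := by
    simpa only [add_div, mul_div_assoc] using (h0.const_mul c).add (h2.const_mul d)
  have hE : Tendsto (fun k => e * n0 k / (k : ℝ)) atTop (𝓝 (e * r0)) := by
    simpa only [mul_div_assoc] using h0.const_mul e
  have hX : Tendsto (fun k => e * x12 k / (k : ℝ)) atTop (𝓝 0) := by
    simpa only [mul_div_assoc, mul_zero] using hx.const_mul e
  have hA : Tendsto (fun k : ℕ => (k : ℝ)⁻¹ • A k) atTop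
      (𝓝 !![a * r0 + b * r1, e * r0; e * r0, c * r0 + d * r2]) :=
    tendsto_inv_natCast_smul_of_fin_two hP hE hE hQ
  have hD : Tendsto (fun k : ℕ => (k : ℝ)⁻¹ • D k) atTop
      (𝓝 !![a * r0 + b * r1, 0; 0, c * r0 + d * r2]) :=
    tendsto_inv_natCast_smul_of_fin_two hP hX hX hQ
  have hBT : Tendsto (fun k : ℕ => ((k : ℝ)⁻¹ • B k)ᵀ) atTop (𝓝 0) := by
    simpa [Function.comp_def] using (continuous_id.matrix_transpose.tendsto 0).comp hB
  have hSchur : Tendsto (fun k : ℕ => (k : ℝ)⁻¹ • D k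
      - ((k : ℝ)⁻¹ • B k)ᵀ * ((k : ℝ)⁻¹ • A k)⁻¹ * ((k : ℝ)⁻¹ • B k)) atTop
      (𝓝 !![a * r0 + b * r1, 0; 0, c * r0 + d * r2]) := by
    simpa using hD.sub ((hBT.mul (hA.matrix_inv hA0)).mul hB)
  refine ⟨fun m0 m1 m2 hm => isUnit_of_fin_two_of_sq_lt_mul (by linarith), hSchur, ?_⟩
  have hD0 : IsUnit (!![a * r0 + b * r1, 0; 0, c * r0 + d * r2]).det := by
    simp [det_fin_two_of, hp.ne', hq.ne']
  rw [← inv_of_fin_two_diag hp.ne' hq.ne']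
  refine (hSchur.matrix_inv hD0).congr' ?_
  filter_upwards [eventually_ne_atTop 0] with k hk
  have hk' : (k : ℝ) ≠ 0 := Nat.cast_ne_zero.2 hk
  rw [smul_sub_transpose_mul_inv_mul_smul (inv_ne_zero hk'), inv_smul_of_ne_zero
    (inv_ne_zero hk'), inv_inv]
end
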